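/- For a random walk (W_i) starting at 0 with i.i.d. increments distributed as ξ−1 where ξ has distribution μ, and a forest f_k of k i.i.d. Galton–Watson trees with offspring distribution μ, for any k ≥ 1 and n ≥ k one has P(|f_k| = n) = (k/n) P(W_n = −k). -/

import Mathlib

/-! Kemperman's form `n · P(|f_k| = n) = k · P(W_n = -k)` is proved by induction on `n`.
Removing the root of the first tree turns a forest of `k + 1` trees and size `n + 1` whose first
root has `j` children into a forest of `j + k` trees and size `n`, and the walk obeys the same
first-step recursion. By induction, `n · P(|f_{j+k}| = n) = (j + k) · P(W_n = -(j + k))`; averaged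
over `j ~ μ`, the part carrying `k` is `k · P(W_{n+1} = -(k + 1))`, and the part carrying `j` is a
first-step mean, which exchangeability of the increments identifies:
`(n + 1) E[ξ₁; W_{n+1} = -k] = E[ξ₁ + ⋯ + ξ_{n+1}; W_{n+1} = -k] = (n + 1 - k) P(W_{n+1} = -k)`. -/

open scoped ENNReal

inductive PlaneTree : Type
  | node : List PlaneTree → PlaneTree

namespace PlaneTree

mutual
def size : PlaneTree → ℕ
  | .node ts => 1 + sizeL ts
def sizeL : List PlaneTree → ℕ
  | [] => 0
  | t :: ts => size t + sizeL ts
end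

mutual
/-- The Galton–Watson weight of a finite plane tree: the product over all
vertices `u` of `μ (number of children of u)`. -/
noncomputable def weight (μ : ℕ → ℝ≥0∞) : PlaneTree → ℝ≥0∞
  | .node ts => μ ts.length * weightL μ ts
noncomputable def weightL (μ : ℕ → ℝ≥0∞) : List PlaneTree → ℝ≥0∞
  | [] => 1
  | t :: ts => weight μ t * weightL μ ts
end

end PlaneTree

/-- `P(|f_k| = n)`: probability that a forest of `k` i.i.d. Galton–Watson trees with
offspring distribution `μ` has total size `n`. -/
noncomputable def forestProb (μ : ℕ → ℝ≥0∞) (k n : ℕ) : ℝ≥0∞ :=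
  ∑' f : Fin k → PlaneTree,
    if (∑ i : Fin k, (f i).size) = n then ∏ i : Fin k, (f i).weight μ else 0

/-- `P(W_n = x)` for the left-continuous random walk with `n` i.i.d. steps distributed
as `ξ - 1`, `ξ ~ μ`, started at `0`. -/
noncomputable def walkProb (μ : ℕ → ℝ≥0∞) (n : ℕ) (x : ℤ) : ℝ≥0∞ :=
  ∑' ξ : Fin n → ℕ,
    if (∑ i : Fin n, ((ξ i : ℤ) - 1)) = x then ∏ i : Fin n, μ (ξ i) else 0

namespace PlaneTree

theorem one_le_size (t : PlaneTree) : 1 ≤ t.size := by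
  cases t; simp [size]

theorem sizeL_ofFn {j : ℕ} (g : Fin j → PlaneTree) : sizeL (List.ofFn g) = ∑ i, (g i).size := by
  induction j with
  | zero => simp [sizeL]
  | succ j ih => simp [List.ofFn_succ, sizeL, ih, Fin.sum_univ_succ]

theorem weightL_ofFn (μ : ℕ → ℝ≥0∞) {j : ℕ} (g : Fin j → PlaneTree) :
    weightL μ (List.ofFn g) = ∏ i, (g i).weight μ := by
  induction j with
  | zero => simp [weightL]
  | succ j ih => simp [List.ofFn_succ, weightL, ih, Fin.prod_univ_succ]

def nodeEquiv : List PlaneTree ≃ PlaneTree where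
  toFun := node
  invFun | node ts => ts
  left_inv _ := rfl
  right_inv | node _ => rfl

/-- `forestGraftEquiv k ⟨j, h⟩` hangs the first `j` trees of `h` below a new root and keeps the
last `k` trees: every forest of `k + 1` trees arises this way from the number `j` of children of
its first root. -/
def forestGraftEquiv (k : ℕ) : (Σ j, Fin (j + k) → PlaneTree) ≃ (Fin (k + 1) → PlaneTree) :=
  (Equiv.sigmaCongrRight fun j => (Fin.appendEquiv j k).symm).trans <|
    (Equiv.sigmaProdDistrib _ _).symm.trans <|
      (Equiv.prodCongr (List.equivSigmaTuple.symm.trans nodeEquiv) (Equiv.refl _)).trans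
        (Fin.consEquiv fun _ => PlaneTree)

theorem forestGraftEquiv_apply {j k : ℕ} (h : Fin (j + k) → PlaneTree) :
    forestGraftEquiv k ⟨j, h⟩ =
      Fin.cons (node (List.ofFn fun i => h (Fin.castAdd k i))) fun i => h (Fin.natAdd j i) :=
  rfl

theorem sum_size_forestGraftEquiv {j k : ℕ} (h : Fin (j + k) → PlaneTree) :
    ∑ i, (forestGraftEquiv k ⟨j, h⟩ i).size = 1 + ∑ i, (h i).size := by
  rw [forestGraftEquiv_apply, Fin.sum_univ_succ, Fin.sum_univ_add (f := fun i => (h i).size)]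
  simp [size, sizeL_ofFn, add_assoc]

theorem prod_weight_forestGraftEquiv (μ : ℕ → ℝ≥0∞) {j k : ℕ} (h : Fin (j + k) → PlaneTree) :
    ∏ i, (forestGraftEquiv k ⟨j, h⟩ i).weight μ = μ j * ∏ i, (h i).weight μ := by
  rw [forestGraftEquiv_apply, Fin.prod_univ_succ, Fin.prod_univ_add (f := fun i => (h i).weight μ)]
  simp [weight, weightL_ofFn, mul_assoc]

end PlaneTree

open PlaneTree

section

variable (μ : ℕ → ℝ≥0∞)

theorem forestProb_zero_left (n : ℕ) : forestProb μ 0 n = if n = 0 then 1 else 0 := by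
  rw [forestProb, tsum_eq_single (default : Fin 0 → PlaneTree) fun f hf =>
    absurd (Subsingleton.elim f default) hf]
  simp [eq_comm]

theorem forestProb_eq_zero_of_lt {k n : ℕ} (h : n < k) : forestProb μ k n = 0 := by
  refine ENNReal.tsum_eq_zero.2 fun f => if_neg fun hf => h.not_ge ?_
  simpa [← hf] using Finset.card_nsmul_le_sum Finset.univ (fun i => (f i).size) 1
    fun i _ => one_le_size (f i)

theorem forestProb_succ_succ (k n : ℕ) :
    forestProb μ (k + 1) (n + 1) = ∑' j, μ j * forestProb μ (j + k) n := by
  rw [forestProb, ← (forestGraftEquiv k).tsum_eq, ENNReal.tsum_sigma']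
  refine tsum_congr fun j => ?_
  rw [forestProb, ← ENNReal.tsum_mul_left]
  refine tsum_congr fun h => ?_
  simp only [sum_size_forestGraftEquiv, prod_weight_forestGraftEquiv, add_comm 1,
    Nat.add_right_cancel_iff, mul_ite, mul_zero]

theorem walkProb_zero_left (x : ℤ) : walkProb μ 0 x = if x = 0 then 1 else 0 := by
  rw [walkProb, tsum_eq_single (default : Fin 0 → ℕ) fun ξ hξ =>
    absurd (Subsingleton.elim ξ default) hξ]
  simp [eq_comm]

theorem walkProb_neg_eq_zero_of_lt {k n : ℕ} (h : n < k) : walkProb μ n (-k) = 0 := by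
  refine ENNReal.tsum_eq_zero.2 fun ξ => if_neg fun hξ => ?_
  have : -(n : ℤ) ≤ ∑ i, ((ξ i : ℤ) - 1) := by
    simpa using Finset.card_nsmul_le_sum Finset.univ (fun i => (ξ i : ℤ) - 1) (-1)
      fun i _ => by omega
  omega

theorem tsum_walk_first_step (g : ℕ → ℝ≥0∞) (n : ℕ) (x : ℤ) :
    ∑' ξ : Fin (n + 1) → ℕ,
        (if ∑ i, ((ξ i : ℤ) - 1) = x then g (ξ 0) * ∏ i, μ (ξ i) else 0) =
      ∑' j, g j * μ j * walkProb μ n (x + 1 - j) := by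
  rw [← (Fin.consEquiv fun _ => ℕ).tsum_eq, ENNReal.tsum_prod']
  refine tsum_congr fun j => ?_
  rw [walkProb, ← ENNReal.tsum_mul_left]
  refine tsum_congr fun η => ?_
  have hstep : (j : ℤ) - 1 + ∑ i, ((η i : ℤ) - 1) = x ↔ ∑ i, ((η i : ℤ) - 1) = x + 1 - j := by
    omega
  simp only [Fin.consEquiv_apply, Fin.sum_univ_succ, Fin.prod_univ_succ, Fin.cons_zero,
    Fin.cons_succ, hstep, mul_ite, mul_zero, mul_assoc]

theorem walkProb_succ (n : ℕ) (x : ℤ) :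
    walkProb μ (n + 1) x = ∑' j, μ j * walkProb μ n (x + 1 - j) := by
  rw [walkProb]
  simpa only [Pi.one_apply, one_mul] using tsum_walk_first_step μ 1 n x

theorem tsum_walk_coord_eq {m : ℕ} (i i' : Fin m) (x : ℤ) :
    ∑' ξ : Fin m → ℕ, (if ∑ t, ((ξ t : ℤ) - 1) = x then (ξ i : ℝ≥0∞) * ∏ t, μ (ξ t) else 0) =
      ∑' ξ : Fin m → ℕ,
        (if ∑ t, ((ξ t : ℤ) - 1) = x then (ξ i' : ℝ≥0∞) * ∏ t, μ (ξ t) else 0) := by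
  rw [← (Equiv.arrowCongr (Equiv.swap i i') (Equiv.refl ℕ)).tsum_eq]
  refine tsum_congr fun ξ => ?_
  simp only [Equiv.arrowCongr_apply, Equiv.symm_swap, Equiv.coe_refl, Function.comp_apply, id,
    Equiv.swap_apply_left, Equiv.sum_comp (Equiv.swap i i') fun t => (ξ t : ℤ) - 1,
    Equiv.prod_comp (Equiv.swap i i') fun t => μ (ξ t)]

theorem succ_mul_first_step_mean (n k : ℕ) :
    ((n + 1 : ℕ) : ℝ≥0∞) * ∑' j : ℕ, (j : ℝ≥0∞) * μ j * walkProb μ n (-k + 1 - j) =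
      ((n + 1 - k : ℕ) : ℝ≥0∞) * walkProb μ (n + 1) (-k) := by
  calc ((n + 1 : ℕ) : ℝ≥0∞) * ∑' j : ℕ, (j : ℝ≥0∞) * μ j * walkProb μ n (-k + 1 - j)
      = ∑ i : Fin (n + 1), ∑' ξ : Fin (n + 1) → ℕ,
          if ∑ t, ((ξ t : ℤ) - 1) = -k then (ξ i : ℝ≥0∞) * ∏ t, μ (ξ t) else 0 := by
        simp only [tsum_walk_coord_eq μ _ 0, Finset.sum_const, Finset.card_univ, Fintype.card_fin,
          nsmul_eq_mul, tsum_walk_first_step, Nat.cast_add, Nat.cast_one]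
    _ = ∑' ξ : Fin (n + 1) → ℕ, ∑ i,
          if ∑ t, ((ξ t : ℤ) - 1) = -k then (ξ i : ℝ≥0∞) * ∏ t, μ (ξ t) else 0 :=
        (Summable.tsum_finsetSum fun i _ => ENNReal.summable).symm
    _ = ((n + 1 - k : ℕ) : ℝ≥0∞) * walkProb μ (n + 1) (-k) := by
      rw [walkProb, ← ENNReal.tsum_mul_left]
      refine tsum_congr fun ξ => ?_
      split_ifs with hξ
      · have hsum : ∑ t, ξ t = n + 1 - k := by
          simp only [Finset.sum_sub_distrib, Finset.sum_const, Finset.card_univ, Fintype.card_fin,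
            nsmul_eq_mul, mul_one, ← Nat.cast_sum] at hξ
          omega
        rw [← Finset.sum_mul, ← Nat.cast_sum, hsum]
      · simp

theorem forestProb_zero_right (k : ℕ) : forestProb μ k 0 = walkProb μ 0 (-k) := by
  cases k with
  | zero => simp [forestProb_zero_left, walkProb_zero_left]
  | succ k => rw [forestProb_eq_zero_of_lt μ k.succ_pos, walkProb_neg_eq_zero_of_lt μ k.succ_pos]

theorem forestProb_one (k : ℕ) : forestProb μ k 1 = k * walkProb μ 1 (-k) := by
  rcases k with _ | _ | k
  · simp [forestProb_zero_left]
  · rw [forestProb_succ_succ, walkProb_succ, Nat.cast_one, one_mul]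
    refine tsum_congr fun j => ?_
    rw [forestProb_zero_right]
    congr 2
    push_cast
    ring
  · rw [forestProb_eq_zero_of_lt μ (by omega), walkProb_neg_eq_zero_of_lt μ (by omega), mul_zero]

theorem natCast_mul_forestProb_succ_succ {n : ℕ} (hn : n ≠ 0)
    (ih : ∀ m : ℕ, (n : ℝ≥0∞) * forestProb μ m n = m * walkProb μ n (-m)) (k : ℕ) :
    ((n + 1 : ℕ) : ℝ≥0∞) * forestProb μ (k + 1) (n + 1) =
      ((k + 1 : ℕ) : ℝ≥0∞) * walkProb μ (n + 1) (-(k + 1 : ℕ)) := by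
  have harg : ∀ j : ℕ, -((k + 1 : ℕ) : ℤ) + 1 - j = -((j + k : ℕ) : ℤ) := fun j => by
    push_cast; ring
  set P := walkProb μ (n + 1) (-(k + 1 : ℕ))
  have hP : P = ∑' j, μ j * walkProb μ n (-(j + k : ℕ)) := by simp only [P, walkProb_succ, harg]
  have hmean := succ_mul_first_step_mean μ n (k + 1)
  simp only [harg, Nat.add_sub_add_right] at hmean
  -- `ih` only determines `n * forestProb μ m n`, so the claim is proved multiplied by `n`.
  refine (ENNReal.mul_right_inj (Nat.cast_ne_zero.2 hn) (ENNReal.natCast_ne_top n)).1 ?_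
  calc (n : ℝ≥0∞) * (((n + 1 : ℕ) : ℝ≥0∞) * forestProb μ (k + 1) (n + 1))
      = ((n + 1 : ℕ) : ℝ≥0∞) * ∑' j, μ j * ((n : ℝ≥0∞) * forestProb μ (j + k) n) := by
        simp only [forestProb_succ_succ, ← ENNReal.tsum_mul_left]
        exact tsum_congr fun j => by ring
    _ = ((n + 1 : ℕ) : ℝ≥0∞) * ∑' j : ℕ, (j : ℝ≥0∞) * μ j * walkProb μ n (-(j + k : ℕ)) +
          ((n + 1 : ℕ) : ℝ≥0∞) * k * P := by
        rw [hP, mul_assoc, ← mul_add]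
        congr 1
        rw [← ENNReal.tsum_mul_left, ← ENNReal.tsum_add]
        refine tsum_congr fun j => ?_
        rw [ih]
        push_cast
        ring
    _ = ((n - k : ℕ) + (n + 1 : ℕ) * k : ℝ≥0∞) * P := by rw [hmean, add_mul]
    _ = (n : ℝ≥0∞) * (((k + 1 : ℕ) : ℝ≥0∞) * P) := by
        rcases le_or_gt k n with hkn | hnk
        · obtain ⟨d, rfl⟩ := Nat.exists_eq_add_of_le hkn
          rw [Nat.add_sub_cancel_left, ← mul_assoc]
          congr 1
          push_cast
          ring
        · simp [P, walkProb_neg_eq_zero_of_lt μ (Nat.succ_lt_succ hnk)]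

theorem natCast_mul_forestProb (k n : ℕ) :
    (n : ℝ≥0∞) * forestProb μ k n = k * walkProb μ n (-k) := by
  induction n generalizing k with
  | zero =>
    cases k with
    | zero => simp
    | succ k => rw [walkProb_neg_eq_zero_of_lt μ k.succ_pos, Nat.cast_zero, zero_mul, mul_zero]
  | succ n ih =>
    rcases k with _ | k
    · simp [forestProb_zero_left]
    rcases eq_or_ne n 0 with rfl | hn
    · simpa using forestProb_one μ (k + 1)
    · exact natCast_mul_forestProb_succ_succ μ hn ih k

end

/-- **Otter / Dvoretzky–Motzkin cyclic lemma.**  For a probability distribution `μ` on `ℕ`,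
a forest of `k` i.i.d. Galton–Watson(μ) trees, and the random walk `W` with i.i.d. steps
`ξ - 1`, `ξ ~ μ`: for `1 ≤ k ≤ n`, `P(|f_k| = n) = (k / n) * P(W_n = -k)`. -/
theorem otter_cyclic_lemma (μ : ℕ → ℝ≥0∞) (hμ : ∑' k, μ k = 1)
    (k n : ℕ) (hk : 1 ≤ k) (hkn : k ≤ n) :
    forestProb μ k n = ((k : ℝ≥0∞) / n) * walkProb μ n (-(k : ℤ)) := by
  have hn : (n : ℝ≥0∞) ≠ 0 := Nat.cast_ne_zero.2 (by omega)
  rw [← ENNReal.mul_div_right_comm, ENNReal.eq_div_iff hn (ENNReal.natCast_ne_top n),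
    natCast_mul_forestProb]
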